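/- arXiv:1901.07094 — 5 statements merged into one kernel-verified Lean document; each statement's English description precedes it below -/
import Mathlib

section
/- Let R be a ring and let p and q be idempotents in R with p ∼ q. If p is properly infinite, then q is properly infinite (in particular q ≠ 0 and q ⊕ q ≾ q). -/
/-- Lemma 3.1: Let `R` be a (not necessarily unital) ring and let `p` and `q`
be idempotents in `R` with `p ∼ q` (i.e. `r * s = p` and `s * r = q` for some `r s : R`).
If `p` is properly infinite (`p ≠ 0` and `p ⊕ p ≾ p`), then `q` is properly infinite
(in particular `q ≠ 0` and `q ⊕ q ≾ q`). -/
theorem properlyInfinite_of_equiv {R : Type*} [NonUnitalRing R]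
    (p q : R) (hp : p * p = p) (hq : q * q = q)
    (hpq : ∃ r s : R, r * s = p ∧ s * r = q)
    (hp_ne : p ≠ 0)
    (hp_pi : ∃ (x : Matrix (Fin 2) (Fin 1) R) (y : Matrix (Fin 1) (Fin 2) R),
      x * !![p] * y = !![p, 0; 0, p]) :
    q ≠ 0 ∧ ∃ (x : Matrix (Fin 2) (Fin 1) R) (y : Matrix (Fin 1) (Fin 2) R),
      x * !![q] * y = !![q, 0; 0, q] := by
  obtain ⟨r, s, hrs, hsr⟩ := hpq
  obtain ⟨x, y, hxy⟩ := hp_pi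
  have hrqs : r * q * s = p := by
    rw [← hsr, ← hp, ← hrs]; simp [mul_assoc]
  have hspr : s * p * r = q := by
    rw [← hrs, ← hq, ← hsr]; simp [mul_assoc]
  constructor
  · intro h
    apply hp_ne
    rw [← hrqs, h, mul_zero, zero_mul]
  · refine ⟨!![s, 0; 0, s] * x * !![r], !![s] * y * !![r, 0; 0, r], ?_⟩
    have key : !![r] * !![q] * !![s] = (!![p] : Matrix (Fin 1) (Fin 1) R) := by
      ext i j
      fin_cases i; fin_cases j
      simp [Matrix.mul_apply, hrqs]
    calc !![s, 0; 0, s] * x * !![r] * !![q] * (!![s] * y * !![r, 0; 0, r])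
        = !![s, 0; 0, s] * (x * (!![r] * !![q] * !![s]) * y) * !![r, 0; 0, r] := by
          simp only [Matrix.mul_assoc]
      _ = !![s, 0; 0, s] * !![p, 0; 0, p] * !![r, 0; 0, r] := by rw [key, hxy]
      _ = !![q, 0; 0, q] := by
          ext i j
          fin_cases i <;> fin_cases j <;>
            simp [Matrix.mul_apply, Fin.sum_univ_succ, hspr]
end

section
/- Let R be a purely infinite ring and let p be a nonzero idempotent in R. If there exist idempotents q₁, q₂ ∈ R with q₁q₂ = q₂q₁ = 0 such that p lies in the two-sided ideal of R generated by q₁ and p also lies in the two-sided ideal of R generated by q₂, then p is properly infinite, i.e., there exist a column matrix X ∈ M_{2,1}(R) and a row matrix Y ∈ M_{1,2}(R) with X·p·Y = p ⊕ p. -/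
/-- `b` lies in the two-sided ideal of `R` generated by `a`: membership in the additive
subgroup generated by `a`, `r*a`, `a*r` and `r*a*s` (`R` not assumed unital). -/
def MemIdealGen {R : Type*} [NonUnitalRing R] (a b : R) : Prop :=
  b ∈ AddSubgroup.closure
    {x : R | x = a ∨ (∃ r : R, x = r * a) ∨ (∃ r : R, x = a * r) ∨ ∃ r s : R, x = r * a * s}

/-- `Q` is a division ring (with respect to its given multiplication and zero):
there is a nonzero two-sided multiplicative identity `u` and every nonzero element
has a two-sided inverse. -/
def IsDivisionRingLike (Q : Type*) [Mul Q] [Zero Q] : Prop :=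
  ∃ u : Q, u ≠ 0 ∧ (∀ x : Q, u * x = x ∧ x * u = x) ∧
    ∀ x : Q, x ≠ 0 → ∃ y : Q, x * y = u ∧ y * x = u

/-- A ring `R` is purely infinite if (1) no quotient of `R` by a two-sided ideal is a
division ring, and (2) whenever `b` lies in the two-sided ideal generated by `a`,
we have `b ≾ a`, i.e. `b = x * a * y` for some `x y : R`. -/
def IsPurelyInfiniteRing (R : Type*) [NonUnitalRing R] : Prop :=
  (∀ I : TwoSidedIdeal R, ¬ IsDivisionRingLike I.ringCon.Quotient) ∧
  (∀ a b : R, MemIdealGen a b → ∃ x y : R, b = x * a * y)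

/-- Lemma 4.1: Let `R` be a purely infinite ring and `p` a nonzero idempotent.
If there are orthogonal idempotents `q₁, q₂` such that `p` lies in the two-sided ideal
generated by `q₁` and also in the two-sided ideal generated by `q₂`, then `p` is properly
infinite: `X * p * Y = p ⊕ p` for some column matrix `X` and row matrix `Y`. -/
theorem properlyInfinite_of_purelyInfinite {R : Type*} [NonUnitalRing R]
    (hR : IsPurelyInfiniteRing R)
    (p q₁ q₂ : R) (hp : p * p = p) (hp_ne : p ≠ 0)
    (hq₁ : q₁ * q₁ = q₁) (hq₂ : q₂ * q₂ = q₂)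
    (horth₁ : q₁ * q₂ = 0) (horth₂ : q₂ * q₁ = 0)
    (hmem₁ : MemIdealGen q₁ p) (hmem₂ : MemIdealGen q₂ p) :
    ∃ (X : Matrix (Fin 2) (Fin 1) R) (Y : Matrix (Fin 1) (Fin 2) R),
      X * !![p] * Y = !![p, 0; 0, p] := by
  obtain ⟨-, hcmp⟩ := hR
  obtain ⟨x₁, y₁, hxy₁⟩ := hcmp q₁ p hmem₁
  obtain ⟨x₂, y₂, hxy₂⟩ := hcmp q₂ p hmem₂
  set c₁ : R := p * x₁ * q₁ with hc₁
  set c₂ : R := p * x₂ * q₂ with hc₂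
  set d₁ : R := q₁ * y₁ * p with hd₁
  set d₂ : R := q₂ * y₂ * p with hd₂
  have hcd₁₁ : c₁ * d₁ = p := by
    have h : c₁ * d₁ = p * (x₁ * q₁ * y₁ * p) := by
      rw [hc₁, hd₁]; simp only [mul_assoc]; rw [← mul_assoc q₁ q₁, hq₁]
    rw [h, show x₁ * q₁ * y₁ * p = (x₁ * q₁ * y₁) * p from rfl, ← hxy₁, hp, hp]
  have hcd₂₂ : c₂ * d₂ = p := by
    have h : c₂ * d₂ = p * (x₂ * q₂ * y₂ * p) := by
      rw [hc₂, hd₂]; simp only [mul_assoc]; rw [← mul_assoc q₂ q₂, hq₂]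
    rw [h, show x₂ * q₂ * y₂ * p = (x₂ * q₂ * y₂) * p from rfl, ← hxy₂, hp, hp]
  have hcd₁₂ : c₁ * d₂ = 0 := by
    have h : c₁ * d₂ = p * (x₁ * ((q₁ * q₂) * (y₂ * p))) := by
      rw [hc₁, hd₂]; simp only [mul_assoc]
    rw [h, horth₁, zero_mul, mul_zero, mul_zero]
  have hcd₂₁ : c₂ * d₁ = 0 := by
    have h : c₂ * d₁ = p * (x₂ * ((q₂ * q₁) * (y₁ * p))) := by
      rw [hc₂, hd₁]; simp only [mul_assoc]
    rw [h, horth₂, zero_mul, mul_zero, mul_zero]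
  set g : R := d₁ * c₁ + d₂ * c₂ with hgdef
  have hg₁ : d₁ * c₁ = (q₁ * y₁) * p * (x₁ * q₁) := by
    rw [hd₁, hc₁]; simp only [mul_assoc]; rw [← mul_assoc p p, hp]
  have hg₂ : d₂ * c₂ = (q₂ * y₂) * p * (x₂ * q₂) := by
    rw [hd₂, hc₂]; simp only [mul_assoc]; rw [← mul_assoc p p, hp]
  have hgmem : MemIdealGen p g := by
    refine AddSubgroup.add_mem _ ?_ ?_ <;> apply AddSubgroup.subset_closure
    · exact Or.inr (Or.inr (Or.inr ⟨q₁ * y₁, x₁ * q₁, hg₁⟩))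
    · exact Or.inr (Or.inr (Or.inr ⟨q₂ * y₂, x₂ * q₂, hg₂⟩))
  obtain ⟨w, v, hg⟩ := hcmp p g hgmem
  have key₁₁ : c₁ * (w * p * v) * d₁ = p := by
    rw [← hg, hgdef, mul_add, add_mul, ← mul_assoc c₁ d₁, hcd₁₁,
      ← mul_assoc c₁ d₂, hcd₁₂, zero_mul, zero_mul, add_zero,
      mul_assoc p c₁ d₁, hcd₁₁, hp]
  have key₂₂ : c₂ * (w * p * v) * d₂ = p := by
    rw [← hg, hgdef, mul_add, add_mul, ← mul_assoc c₂ d₁, hcd₂₁,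
      ← mul_assoc c₂ d₂, hcd₂₂, zero_mul, zero_mul, zero_add,
      mul_assoc p c₂ d₂, hcd₂₂, hp]
  have key₁₂ : c₁ * (w * p * v) * d₂ = 0 := by
    rw [← hg, hgdef, mul_add, add_mul, ← mul_assoc c₁ d₁, hcd₁₁,
      ← mul_assoc c₁ d₂, hcd₁₂, zero_mul, zero_mul, add_zero,
      mul_assoc p c₁ d₂, hcd₁₂, mul_zero]
  have key₂₁ : c₂ * (w * p * v) * d₁ = 0 := by
    rw [← hg, hgdef, mul_add, add_mul, ← mul_assoc c₂ d₁, hcd₂₁,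
      ← mul_assoc c₂ d₂, hcd₂₂, zero_mul, zero_mul, zero_add,
      mul_assoc p c₂ d₁, hcd₂₁, mul_zero]
  refine ⟨!![c₁ * w; c₂ * w], !![v * d₁, v * d₂], ?_⟩
  ext i j
  fin_cases i <;> fin_cases j <;>
    simp only [Matrix.mul_apply, Fin.sum_univ_succ, Fin.sum_univ_zero, add_zero,
      Matrix.cons_val', Matrix.cons_val_zero, Matrix.cons_val_one, Matrix.head_cons,
      Matrix.head_fin_const, Matrix.empty_val', Matrix.cons_val_fin_one, Matrix.of_apply]
  · calc c₁ * w * p * (v * d₁) = c₁ * (w * p * v) * d₁ := by simp only [mul_assoc]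
    _ = p := key₁₁
  · calc c₁ * w * p * (v * d₂) = c₁ * (w * p * v) * d₂ := by simp only [mul_assoc]
    _ = 0 := key₁₂
  · calc c₂ * w * p * (v * d₁) = c₂ * (w * p * v) * d₁ := by simp only [mul_assoc]
    _ = 0 := key₂₁
  · calc c₂ * w * p * (v * d₂) = c₂ * (w * p * v) * d₂ := by simp only [mul_assoc]
    _ = p := key₂₂
end

section
/- Let R be a ring, let p be an idempotent in R, and let x₁, x₂ be idempotents in R with x₁x₂ = x₂x₁ = 0, x₁ ∼ p and x₂ ∼ p. If x₁ + x₂ = u·x₁·v for some u, v ∈ R, then p ⊕ p ≾ p, i.e., there exist a column matrix X ∈ M_{2,1}(R) and a row matrix Y ∈ M_{1,2}(R) with X·p·Y = p ⊕ p. -/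
/-- Let `p` be an idempotent and `x₁, x₂` orthogonal idempotents with
`x₁ ∼ p` and `x₂ ∼ p`. If `x₁ + x₂ = u * x₁ * v` for some `u, v`, then `p ⊕ p ≾ p`:
`X * p * Y = p ⊕ p` for some column matrix `X` and row matrix `Y`. -/
theorem properlyInfinite_of_orth_equiv {R : Type*} [NonUnitalRing R]
    (p x₁ x₂ u v : R) (hp : p * p = p)
    (hx₁ : x₁ * x₁ = x₁) (hx₂ : x₂ * x₂ = x₂)
    (horth₁ : x₁ * x₂ = 0) (horth₂ : x₂ * x₁ = 0)
    (h₁ : ∃ r s : R, r * s = x₁ ∧ s * r = p)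
    (h₂ : ∃ r s : R, r * s = x₂ ∧ s * r = p)
    (hsum : x₁ + x₂ = u * x₁ * v) :
    ∃ (X : Matrix (Fin 2) (Fin 1) R) (Y : Matrix (Fin 1) (Fin 2) R),
      X * !![p] * Y = !![p, 0; 0, p] := by
  obtain ⟨r₁, s₁, hrs₁, hsr₁⟩ := h₁
  obtain ⟨r₂, s₂, hrs₂, hsr₂⟩ := h₂
  have Hrs₁ : ∀ t : R, r₁ * (s₁ * t) = x₁ * t := fun t => by rw [← mul_assoc, hrs₁]
  have Hsr₁ : ∀ t : R, s₁ * (r₁ * t) = p * t := fun t => by rw [← mul_assoc, hsr₁]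
  have Hrs₂ : ∀ t : R, r₂ * (s₂ * t) = x₂ * t := fun t => by rw [← mul_assoc, hrs₂]
  have Hsr₂ : ∀ t : R, s₂ * (r₂ * t) = p * t := fun t => by rw [← mul_assoc, hsr₂]
  have Hx₁ : ∀ t : R, x₁ * (x₁ * t) = x₁ * t := fun t => by rw [← mul_assoc, hx₁]
  have Hx₂ : ∀ t : R, x₂ * (x₂ * t) = x₂ * t := fun t => by rw [← mul_assoc, hx₂]
  have Ho₁ : ∀ t : R, x₁ * (x₂ * t) = 0 := fun t => by rw [← mul_assoc, horth₁, zero_mul]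
  have Ho₂ : ∀ t : R, x₂ * (x₁ * t) = 0 := fun t => by rw [← mul_assoc, horth₂, zero_mul]
  have Hp : ∀ t : R, p * (p * t) = p * t := fun t => by rw [← mul_assoc, hp]
  have Hu : ∀ t : R, u * (x₁ * (v * t)) = x₁ * t + x₂ * t := fun t => by
    rw [← mul_assoc, ← mul_assoc, ← hsum, add_mul]
  have hsx₁ : s₁ * x₁ = p * s₁ := by rw [← hsr₁, ← hrs₁, mul_assoc]
  have hsx₂ : s₂ * x₂ = p * s₂ := by rw [← hsr₂, ← hrs₂, mul_assoc]
  have hrp₁ : r₁ * p = x₁ * r₁ := by rw [← hsr₁, ← hrs₁, mul_assoc]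
  have hrp₂ : r₂ * p = x₂ * r₂ := by rw [← hsr₂, ← hrs₂, mul_assoc]
  have Hsx₁ : ∀ t : R, s₁ * (x₁ * t) = p * (s₁ * t) := fun t => by
    rw [← mul_assoc, hsx₁, mul_assoc]
  have Hsx₂ : ∀ t : R, s₂ * (x₂ * t) = p * (s₂ * t) := fun t => by
    rw [← mul_assoc, hsx₂, mul_assoc]
  have Hrp₁ : ∀ t : R, r₁ * (p * t) = x₁ * (r₁ * t) := fun t => by
    rw [← mul_assoc, hrp₁, mul_assoc]
  have Hrp₂ : ∀ t : R, r₂ * (p * t) = x₂ * (r₂ * t) := fun t => by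
    rw [← mul_assoc, hrp₂, mul_assoc]
  have key₁ : (s₁ * x₁ * u * r₁) * p * (s₁ * (v * (x₁ * r₁))) = p := by
    simp only [mul_assoc]
    simp only [Hrs₁, Hrs₂, Hsr₁, Hsr₂, Hx₁, Hx₂, Ho₁, Ho₂, Hp, Hu, Hsx₁, Hsx₂,
      Hrp₁, Hrp₂, hrs₁, hrs₂, hsr₁, hsr₂, hx₁, hx₂, horth₁, horth₂, hp,
      hsx₁, hsx₂, hrp₁, hrp₂, mul_add, add_mul, mul_zero, zero_mul, add_zero, zero_add]
  have key₂ : (s₁ * x₁ * u * r₁) * p * (s₁ * (v * (x₂ * r₂))) = 0 := by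
    simp only [mul_assoc]
    simp only [Hrs₁, Hrs₂, Hsr₁, Hsr₂, Hx₁, Hx₂, Ho₁, Ho₂, Hp, Hu, Hsx₁, Hsx₂,
      Hrp₁, Hrp₂, hrs₁, hrs₂, hsr₁, hsr₂, hx₁, hx₂, horth₁, horth₂, hp,
      hsx₁, hsx₂, hrp₁, hrp₂, mul_add, add_mul, mul_zero, zero_mul, add_zero, zero_add]
  have key₃ : (s₂ * x₂ * u * r₁) * p * (s₁ * (v * (x₁ * r₁))) = 0 := by
    simp only [mul_assoc]
    simp only [Hrs₁, Hrs₂, Hsr₁, Hsr₂, Hx₁, Hx₂, Ho₁, Ho₂, Hp, Hu, Hsx₁, Hsx₂,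
      Hrp₁, Hrp₂, hrs₁, hrs₂, hsr₁, hsr₂, hx₁, hx₂, horth₁, horth₂, hp,
      hsx₁, hsx₂, hrp₁, hrp₂, mul_add, add_mul, mul_zero, zero_mul, add_zero, zero_add]
  have key₄ : (s₂ * x₂ * u * r₁) * p * (s₁ * (v * (x₂ * r₂))) = p := by
    simp only [mul_assoc]
    simp only [Hrs₁, Hrs₂, Hsr₁, Hsr₂, Hx₁, Hx₂, Ho₁, Ho₂, Hp, Hu, Hsx₁, Hsx₂,
      Hrp₁, Hrp₂, hrs₁, hrs₂, hsr₁, hsr₂, hx₁, hx₂, horth₁, horth₂, hp,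
      hsx₁, hsx₂, hrp₁, hrp₂, mul_add, add_mul, mul_zero, zero_mul, add_zero, zero_add]
  refine ⟨!![s₁ * x₁ * u * r₁; s₂ * x₂ * u * r₁],
    !![s₁ * (v * (x₁ * r₁)), s₁ * (v * (x₂ * r₂))], ?_⟩
  ext i j
  fin_cases i <;> fin_cases j <;>
    simp only [Matrix.mul_apply, Fin.sum_univ_succ, Fin.sum_univ_zero, add_zero,
      Matrix.cons_val', Matrix.cons_val_zero, Matrix.cons_val_one, Matrix.head_cons,
      Matrix.empty_val', Matrix.cons_val_fin_one, Matrix.head_fin_const, Fin.isValue,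
      Matrix.cons_val_zero, Matrix.of_apply]
  · exact key₁
  · exact key₂
  · exact key₃
  · exact key₄
end

section
/- Let k ≥ 1, let Λ be a k-graph, let λ be a morphism of Λ with v = r(λ), and suppose the set {w : w a vertex with vΛw ≠ ∅} is finite of cardinality t₀ and |d(λ)| ≥ t₀. Then there exist m, n ∈ ℕ^k with m ≤ n ≤ d(λ) and m ≠ n such that the unique initial segments of λ of degrees m and n have the same source; consequently there exist a vertex w with vΛw ≠ ∅ and a cycle γ with s(γ) = r(γ) = w and d(γ) = n − m ≠ 0. -/
/-!
Walking along `f` one unit of degree at a time gives a chain `0 = m₀ < m₁ < ⋯ < m_{t₀} ≤ d f`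
with `|mⱼ| = j`. The `t₀ + 1` initial segments of `f` of these degrees have their sources among
the `t₀` vertices that reach `v`, so two of them, of degrees `m < n`, share a source `w`.
Factorizing the degree-`n` segment at degree `m` and comparing with the degree-`m` segment by
unique factorization, the remaining piece starts at `w` as well: it is a cycle of degree `n - m`.
-/

open CategoryTheory

/-- A `k`-graph structure on a category `Λ`: a degree map `d` (with values in `ℕ^k`)
satisfying `d(𝟙 v) = 0`, additivity on composites, and the unique factorization
property. Here a morphism `f : a ⟶ b` has source `a` and range `b`, and in the
factorization `f = ν ≫ μ` the factor `μ : c ⟶ b` is the initial segment of degree `m`. -/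
structure IsKGraph {k : ℕ} (Λ : Type*) [Category Λ]
    (d : ∀ {a b : Λ}, (a ⟶ b) → (Fin k → ℕ)) : Prop where
  d_id : ∀ v : Λ, d (𝟙 v) = 0
  d_comp : ∀ {a b c : Λ} (f : a ⟶ b) (g : b ⟶ c), d (f ≫ g) = d f + d g
  uniqueFactorization : ∀ {a b : Λ} (f : a ⟶ b) (m : Fin k → ℕ), m ≤ d f →
    ∃! p : Σ c : Λ, (a ⟶ c) × (c ⟶ b), d p.2.2 = m ∧ p.2.1 ≫ p.2.2 = f

theorem exists_monotone_le_sum_eq {ι : Type*} [Fintype ι] (n : ι → ℕ) :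
    ∃ M : ℕ → ι → ℕ, Monotone M ∧ (∀ j, M j ≤ n) ∧ ∀ j ≤ ∑ i, n i, ∑ i, M j i = j := by
  classical
  induction hs : ∑ i, n i generalizing n with
  | zero =>
    refine ⟨fun _ => 0, monotone_const, fun _ _ => Nat.zero_le _, fun j hj => ?_⟩
    simp only [Pi.zero_apply, Finset.sum_const_zero]
    omega
  | succ s ih =>
    obtain ⟨i, hi⟩ : ∃ i, n i ≠ 0 := by
      by_contra! h
      simp [h] at hs
    set n' := n - Pi.single i 1
    have hn : n' + Pi.single i 1 = n := by
      ext l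
      rcases eq_or_ne l i with rfl | hl
      · simp only [n', Pi.add_apply, Pi.sub_apply, Pi.single_eq_same]; omega
      · simp [n', hl]
    have hs' : ∑ l, n' l = s := by
      rw [← hn] at hs
      simp only [Pi.add_apply, Finset.sum_add_distrib, Finset.sum_pi_single'] at hs
      simpa using hs
    obtain ⟨M, hmono, hle, hsum⟩ := ih n' hs'
    have hn'n : n' ≤ n := tsub_le_self
    refine ⟨fun j => if j ≤ s then M j else n, fun j j' hjj' => ?_, fun j => ?_, fun j hj => ?_⟩
    · dsimp only
      split_ifs with h h' h'
      · exact hmono hjj'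
      · exact (hle j).trans hn'n
      · omega
      · exact le_rfl
    · dsimp only
      split_ifs
      exacts [(hle j).trans hn'n, le_rfl]
    · dsimp only
      split_ifs with h
      · exact hsum j h
      · rw [hs]; omega

theorem Set.Finite.exists_lt_map_eq_of_forall_le_ncard {α : Type*} {t : Set α} (ht : t.Finite)
    {g : ℕ → α} (hg : ∀ j ≤ t.ncard, g j ∈ t) :
    ∃ x y, x < y ∧ y ≤ t.ncard ∧ g x = g y := by
  obtain ⟨x, hx, y, hy, hne, hxy⟩ := Set.exists_ne_map_eq_of_ncard_lt_of_maps_to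
    (s := Set.Iic t.ncard) (by simp) (fun j hj => hg j hj) ht
  rcases hne.lt_or_gt with h | h
  · exact ⟨x, y, h, hy, hxy⟩
  · exact ⟨y, x, h, hx, hxy.symm⟩

namespace IsKGraph

variable {k : ℕ} {Λ : Type*} [Category Λ] {d : ∀ {a b : Λ}, (a ⟶ b) → (Fin k → ℕ)}

theorem d_eqToHom (hΛ : IsKGraph Λ @d) {a b : Λ} (h : a = b) : d (eqToHom h) = 0 := by
  subst h
  exact hΛ.d_id a

theorem exists_cycle_of_comp_eq_comp (hΛ : IsKGraph Λ @d) {u w v : Λ} {ν₁ ν₂ : u ⟶ w}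
    {μ₁ μ₂ : w ⟶ v} (h : ν₁ ≫ μ₁ = ν₂ ≫ μ₂) (hle : d μ₁ ≤ d μ₂) :
    ∃ γ : w ⟶ w, d γ = d μ₂ - d μ₁ := by
  obtain ⟨⟨c, α, β⟩, ⟨hβ, hαβ⟩, -⟩ := hΛ.uniqueFactorization μ₂ (d μ₁) hle
  dsimp only at hβ hαβ
  have hsame : (⟨c, ν₂ ≫ α, β⟩ : Σ c : Λ, (u ⟶ c) × (c ⟶ v)) = ⟨w, ν₁, μ₁⟩ :=
    (hΛ.uniqueFactorization (ν₁ ≫ μ₁) (d μ₁) (hΛ.d_comp ν₁ μ₁ ▸ le_add_self)).unique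
      ⟨hβ, by rw [Category.assoc, hαβ, h]⟩ ⟨rfl, rfl⟩
  obtain ⟨rfl, -⟩ := Sigma.mk.inj_iff.mp hsame
  refine ⟨α, ?_⟩
  rw [← hαβ, hΛ.d_comp, hβ, add_tsub_cancel_right]

theorem exists_initialSegments_same_source (hΛ : IsKGraph Λ @d) {u v : Λ} (f : u ⟶ v)
    (hfin : {w : Λ | Nonempty (w ⟶ v)}.Finite)
    (hlen : {w : Λ | Nonempty (w ⟶ v)}.ncard ≤ ∑ i, d f i) :
    ∃ m n : Fin k → ℕ, m ≤ n ∧ n ≤ d f ∧ m ≠ n ∧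
      ∃ (w : Λ) (νm : u ⟶ w) (μm : w ⟶ v) (νn : u ⟶ w) (μn : w ⟶ v),
        d μm = m ∧ νm ≫ μm = f ∧ d μn = n ∧ νn ≫ μn = f := by
  obtain ⟨M, hmono, hle, hsum⟩ := exists_monotone_le_sum_eq (d f)
  have hfac (j : ℕ) : ∃ (c : Λ) (ν : u ⟶ c) (μ : c ⟶ v), d μ = M j ∧ ν ≫ μ = f := by
    obtain ⟨⟨c, ν, μ⟩, hp, -⟩ := hΛ.uniqueFactorization f (M j) (hle j)
    exact ⟨c, ν, μ, hp⟩
  choose c ν μ hd hcomp using hfac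
  obtain ⟨x, y, hxy, hy, hc⟩ :=
    hfin.exists_lt_map_eq_of_forall_le_ncard (g := c) fun j _ => ⟨μ j⟩
  refine ⟨M x, M y, hmono hxy.le, hle y, fun h => ?_, c y, ν x ≫ eqToHom hc,
    eqToHom hc.symm ≫ μ x, ν y, μ y, ?_, ?_, hd y, hcomp y⟩
  · have := congrArg (fun m => ∑ i, m i) h
    simp only [hsum x (by omega), hsum y (by omega)] at this
    omega
  · rw [hΛ.d_comp, hΛ.d_eqToHom, zero_add, hd]
  · simp [hcomp]

end IsKGraph

theorem exists_cycle_of_long_path_general {k : ℕ} {Λ : Type*} [Category Λ]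
    (d : ∀ {a b : Λ}, (a ⟶ b) → (Fin k → ℕ)) (hΛ : IsKGraph Λ @d)
    {u v : Λ} (f : u ⟶ v) (t₀ : ℕ)
    (hfin : {w : Λ | Nonempty (w ⟶ v)}.Finite)
    (hcard : {w : Λ | Nonempty (w ⟶ v)}.ncard = t₀)
    (hlen : t₀ ≤ ∑ i, d f i) :
    ∃ m n : Fin k → ℕ, m ≤ n ∧ n ≤ d f ∧ m ≠ n ∧
      ∃ (w : Λ) (νm : u ⟶ w) (μm : w ⟶ v) (νn : u ⟶ w) (μn : w ⟶ v),
        d μm = m ∧ νm ≫ μm = f ∧ d μn = n ∧ νn ≫ μn = f ∧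
        Nonempty (w ⟶ v) ∧ ∃ γ : w ⟶ w, d γ = n - m ∧ n - m ≠ 0 := by
  obtain ⟨m, n, hmn, hnf, hne, w, νm, μm, νn, μn, hdm, hfm, hdn, hfn⟩ :=
    hΛ.exists_initialSegments_same_source f hfin (hcard ▸ hlen)
  obtain ⟨γ, hγ⟩ := hΛ.exists_cycle_of_comp_eq_comp (hfm.trans hfn.symm) (hdm ▸ hdn ▸ hmn)
  refine ⟨m, n, hmn, hnf, hne, w, νm, μm, νn, μn, hdm, hfm, hdn, hfn, ⟨μn⟩, γ, hdm ▸ hdn ▸ hγ, ?_⟩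
  rw [Ne, tsub_eq_zero_iff_le]
  exact fun h => hne (hmn.antisymm h)

/-- Let `Λ` be a `k`-graph (`k ≥ 1`), `f : u ⟶ v` a morphism with range
`v`, and suppose `{w | vΛw ≠ ∅}` is finite of cardinality `t₀` with `|d f| ≥ t₀`. Then
there are `m ≤ n ≤ d f` with `m ≠ n` whose initial segments of `f` have the same source
`w`; consequently `vΛw ≠ ∅` and there is a cycle `γ : w ⟶ w` with `d γ = n - m ≠ 0`. -/
theorem exists_cycle_of_long_path {k : ℕ} (hk : 1 ≤ k) {Λ : Type*} [Category Λ]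
    (d : ∀ {a b : Λ}, (a ⟶ b) → (Fin k → ℕ)) (hΛ : IsKGraph Λ @d)
    {u v : Λ} (f : u ⟶ v) (t₀ : ℕ)
    (hfin : {w : Λ | Nonempty (w ⟶ v)}.Finite)
    (hcard : {w : Λ | Nonempty (w ⟶ v)}.ncard = t₀)
    (hlen : t₀ ≤ ∑ i, d f i) :
    ∃ m n : Fin k → ℕ, m ≤ n ∧ n ≤ d f ∧ m ≠ n ∧
      ∃ (w : Λ) (νm : u ⟶ w) (μm : w ⟶ v) (νn : u ⟶ w) (μn : w ⟶ v),
        d μm = m ∧ νm ≫ μm = f ∧ d μn = n ∧ νn ≫ μn = f ∧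
        Nonempty (w ⟶ v) ∧ ∃ γ : w ⟶ w, d γ = n - m ∧ n - m ≠ 0 :=
  exists_cycle_of_long_path_general d hΛ f t₀ hfin hcard hlen
end

section
/- Let k ≥ 1 and let Λ be a k-graph such that for every vertex v: (i) the set {w : w a vertex with vΛw ≠ ∅} is finite, and (ii) there exists a morphism λ with r(λ) = v and d(λ) ≠ 0. Then every vertex of Λ is reached from a cycle: for every vertex v there exist a vertex w with vΛw ≠ ∅ and a cycle γ with s(γ) = r(γ) = w and d(γ) ≠ 0. -/
open CategoryTheory

/-- Proposition 4.6, (1) ⟹ (2): Let `Λ` be a `k`-graph (`k ≥ 1`) such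
that for each vertex `v` the set `{w | vΛw ≠ ∅}` is finite and `v` receives a morphism
of nonzero degree. Then every vertex is reached from a cycle: there are a vertex `w`
with `vΛw ≠ ∅` and a cycle `γ : w ⟶ w` with `d γ ≠ 0`. -/
theorem every_vertex_reached_from_cycle {k : ℕ} (hk : 1 ≤ k) {Λ : Type*} [Category Λ]
    (d : ∀ {a b : Λ}, (a ⟶ b) → (Fin k → ℕ)) (hΛ : IsKGraph Λ @d)
    (hfin : ∀ v : Λ, {w : Λ | Nonempty (w ⟶ v)}.Finite)
    (hrec : ∀ v : Λ, ∃ (w : Λ) (f : w ⟶ v), d f ≠ 0) :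
    ∀ v : Λ, ∃ w : Λ, Nonempty (w ⟶ v) ∧ ∃ γ : w ⟶ w, d γ ≠ 0 := by
  intro v
  -- choice functions
  choose W φ hφ using hrec
  -- the backward sequence
  let g : ℕ → Λ := fun n => Nat.rec v (fun _ u => W u) n
  have hg : ∀ n, g (n + 1) = W (g n) := fun n => rfl
  -- paths g (n + m) ⟶ g n with nonzero degree when m ≥ 1
  have key : ∀ n m : ℕ, ∃ f : g (n + m) ⟶ g n, m = 0 ∨ d f ≠ 0 := by
    intro n m
    induction m with
    | zero => exact ⟨𝟙 _, Or.inl rfl⟩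
    | succ m ih =>
      obtain ⟨f, hf⟩ := ih
      refine ⟨φ (g (n + m)) ≫ f, Or.inr ?_⟩
      rw [hΛ.d_comp]
      intro h
      apply hφ (g (n + m))
      funext i
      have := congrFun h i
      simp only [Pi.add_apply, Pi.zero_apply, Nat.add_eq_zero] at this ⊢
      exact this.1
  -- every g n maps to v
  have hmem : ∀ n, Nonempty (g n ⟶ v) := by
    intro n
    have h : ∃ f : g (0 + n) ⟶ g 0, True := by
      obtain ⟨f, -⟩ := key 0 n; exact ⟨f, trivial⟩
    rw [zero_add] at h
    obtain ⟨f, -⟩ := h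
    exact ⟨f⟩
  have hd0 : ∀ {a b : Λ} (h : a = b), d (eqToHom h) = 0 := by
    intro a b h; subst h; simpa using hΛ.d_id a
  -- pigeonhole
  have hS := (hfin v).to_subtype
  let G : ℕ → {w : Λ | Nonempty (w ⟶ v)} := fun n => ⟨g n, hmem n⟩
  obtain ⟨i, j, hne, hGeq⟩ := Finite.exists_ne_map_eq_of_infinite G
  have hgij : g i = g j := congrArg Subtype.val hGeq
  -- wlog i < j
  rcases hne.lt_or_gt with hij | hij
  case _ =>
    have h1 : 1 ≤ j - i := by omega
    have hexists : ∃ f : g (i + (j - i)) ⟶ g i, d f ≠ 0 := by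
      obtain ⟨f, hf⟩ := key i (j - i)
      exact ⟨f, hf.resolve_left (by omega)⟩
    rw [show i + (j - i) = j by omega] at hexists
    obtain ⟨f, hf⟩ := hexists
    refine ⟨g i, hmem i, eqToHom hgij ≫ f, ?_⟩
    rw [hΛ.d_comp]
    rw [hd0 hgij, zero_add]
    exact hf
  case _ =>
    have hgji : g j = g i := hgij.symm
    have h1 : 1 ≤ i - j := by omega
    have hexists : ∃ f : g (j + (i - j)) ⟶ g j, d f ≠ 0 := by
      obtain ⟨f, hf⟩ := key j (i - j)
      exact ⟨f, hf.resolve_left (by omega)⟩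
    rw [show j + (i - j) = i by omega] at hexists
    obtain ⟨f, hf⟩ := hexists
    refine ⟨g j, hmem j, eqToHom hgji ≫ f, ?_⟩
    rw [hΛ.d_comp]
    rw [hd0 hgji, zero_add]
    exact hf
end
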